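/- Let t ≥ 3 and let B be a 3-uniform hypergraph with no K_{2,t} trace, with all co-degrees at most 3t−3, and such that |N_1(x) ∩ N_1(y)| ≤ (t−1)(6t−2) for all pairs x, y. Fix a vertex v, and for u ∈ N_1(v) let E_u = {e ∈ B : e ∩ N_1(v) = {u}} and V_u the set of vertices of the second neighborhood N_2(v) covered by E_u. Then |V_u| ≥ (2/(3t−3))(d(u) − (3t−3) − 3(t−1)²(6t−2)) for every u ∈ N_1(v). -/
import Mathlib


/-- The co-degree of a pair of vertices. -/
def codeg {V : Type*} [DecidableEq V] (H : Finset (Finset V)) (x y : V) : ℕ :=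
  (H.filter fun e => x ∈ e ∧ y ∈ e).card

/-- The 1-neighborhood of `v`. -/
def nbhd {V : Type*} [Fintype V] [DecidableEq V] (B : Finset (Finset V)) (v : V) :
    Finset V :=
  Finset.univ.filter fun u => u ≠ v ∧ ∃ e ∈ B, v ∈ e ∧ u ∈ e

/-- The 2-neighborhood of `v`: vertices at distance exactly 2 from `v`. -/
def nbhd2 {V : Type*} [Fintype V] [DecidableEq V] (B : Finset (Finset V)) (v : V) :
    Finset V :=
  Finset.univ.filter fun x =>
    x ∉ nbhd B v ∧ x ≠ v ∧ ∃ e ∈ B, x ∈ e ∧ ∃ u ∈ e, u ∈ nbhd B v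

/-- `Eu B v u`: edges of `B` meeting `N_1(v)` exactly in `{u}`. -/
def Eu {V : Type*} [Fintype V] [DecidableEq V] (B : Finset (Finset V)) (v u : V) :
    Finset (Finset V) :=
  B.filter fun e => e ∩ nbhd B v = {u}

/-- `Vu B v u`: vertices of the second neighborhood of `v` covered by `Eu B v u`. -/
def Vu {V : Type*} [Fintype V] [DecidableEq V] (B : Finset (Finset V)) (v u : V) :
    Finset V :=
  (nbhd2 B v).filter fun w => ∃ e ∈ Eu B v u, w ∈ e

/-- The degree of a vertex: the number of edges containing it. -/
def deg {V : Type*} [DecidableEq V] (B : Finset (Finset V)) (u : V) : ℕ :=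
  (B.filter fun e => u ∈ e).card

/-- `H` contains `K_{2,t}` as a trace. -/
def HasK2tTrace (t : ℕ) {V : Type*} [DecidableEq V] (H : Finset (Finset V)) : Prop :=
  ∃ (x y : V) (u : Fin t → V) (e f : Fin t → Finset V),
    x ≠ y ∧ Function.Injective u ∧ (∀ i, u i ≠ x ∧ u i ≠ y) ∧
    (∀ i, e i ∈ H) ∧ (∀ i, f i ∈ H) ∧
    Function.Injective e ∧ Function.Injective f ∧ (∀ i j, e i ≠ f j) ∧
    (∀ i, e i ∩ insert x (insert y (Finset.image u Finset.univ)) = {x, u i}) ∧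
    (∀ i, f i ∩ insert x (insert y (Finset.image u Finset.univ)) = {y, u i})

/-- under the stated hypotheses,
`|V_u| ≥ (2/(3t−3))(d(u) − (3t−3) − 3(t−1)²(6t−2))` for every `u ∈ N_1(v)`. -/
theorem stmt_14 {V : Type*} [Fintype V] [DecidableEq V] (t : ℕ) (ht : 3 ≤ t)
    (B : Finset (Finset V)) (h3 : ∀ e ∈ B, e.card = 3)
    (htr : ¬ HasK2tTrace t B)
    (hcodeg : ∀ x y : V, x ≠ y → codeg B x y ≤ 3 * t - 3)
    (hcn : ∀ x y : V, x ≠ y → (nbhd B x ∩ nbhd B y).card ≤ (t - 1) * (6 * t - 2))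
    (v : V) :
    ∀ u ∈ nbhd B v,
      2 / (3 * (t : ℝ) - 3) *
          ((deg B u : ℝ) - (3 * (t : ℝ) - 3) - 3 * ((t : ℝ) - 1) ^ 2 * (6 * (t : ℝ) - 2))
        ≤ ((Vu B v u).card : ℝ) := by
  intro u hu
  have hu' : u ≠ v ∧ ∃ e ∈ B, v ∈ e ∧ u ∈ e := by
    simpa [nbhd] using hu
  -- Basic facts about edges of `Eu`
  have hEuB : ∀ e ∈ Eu B v u, e ∈ B ∧ e ∩ nbhd B v = {u} := by
    intro e he; simpa [Eu] using he
  have hue : ∀ e ∈ Eu B v u, u ∈ e := by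
    intro e he
    have h := (hEuB e he).2
    have : u ∈ e ∩ nbhd B v := by rw [h]; exact Finset.mem_singleton_self u
    exact (Finset.mem_inter.1 this).1
  have hve : ∀ e ∈ Eu B v u, v ∉ e := by
    intro e he hv
    obtain ⟨heB, hcap⟩ := hEuB e he
    have hcard : e.card = 3 := h3 e heB
    have hne : (e \ {u, v}).Nonempty := by
      rw [Finset.sdiff_nonempty]
      intro hsub
      have h1 := Finset.card_le_card hsub
      have h2 : ({u, v} : Finset V).card ≤ 2 := Finset.card_insert_le _ _
      omega
    obtain ⟨w, hw⟩ := hne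
    rw [Finset.mem_sdiff, Finset.mem_insert, Finset.mem_singleton] at hw
    push_neg at hw
    obtain ⟨hwe, hwu, hwv⟩ := hw
    have hwn : w ∈ nbhd B v := by
      simp only [nbhd, Finset.mem_filter, Finset.mem_univ, true_and]
      exact ⟨hwv, e, heB, hv, hwe⟩
    have : w ∈ e ∩ nbhd B v := Finset.mem_inter.2 ⟨hwe, hwn⟩
    rw [hcap, Finset.mem_singleton] at this
    exact hwu this
  -- Every non-`u` vertex of an edge of `Eu` is in `Vu`
  have hmemVu : ∀ e ∈ Eu B v u, ∀ w ∈ e, w ≠ u → w ∈ Vu B v u := by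
    intro e he w hwe hwu
    obtain ⟨heB, hcap⟩ := hEuB e he
    have hwnv : w ∉ nbhd B v := by
      intro hw
      have : w ∈ e ∩ nbhd B v := Finset.mem_inter.2 ⟨hwe, hw⟩
      rw [hcap, Finset.mem_singleton] at this
      exact hwu this
    have hwv : w ≠ v := by rintro rfl; exact hve e he hwe
    have hunb : u ∈ nbhd B v := hu
    simp only [Vu, nbhd2, Finset.mem_filter, Finset.mem_univ, true_and]
    exact ⟨⟨hwnv, hwv, e, heB, hwe, u, hue e he, hunb⟩, e, he, hwe⟩
  -- u is not in Vu
  have huVu : ∀ w ∈ Vu B v u, w ≠ u := by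
    intro w hw
    have : w ∉ nbhd B v := by
      simp only [Vu, nbhd2, Finset.mem_filter, Finset.mem_univ, true_and] at hw
      exact hw.1.1
    intro h; rw [h] at this; exact this hu
  -- Double counting: 2 |Eu| ≤ (3t-3) |Vu|
  have hB2 : 2 * (Eu B v u).card ≤ (3 * t - 3) * (Vu B v u).card := by
    have step1 : ∀ e ∈ Eu B v u, (e \ {u}).card = 2 := by
      intro e he
      rw [Finset.card_sdiff_of_subset (Finset.singleton_subset_iff.2 (hue e he))]
      rw [h3 e (hEuB e he).1, Finset.card_singleton]
    have step2 : ∀ e ∈ Eu B v u,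
        ((Vu B v u).filter (fun w => w ∈ e ∧ w ≠ u)).card = 2 := by
      intro e he
      rw [← step1 e he]
      congr 1
      apply Finset.Subset.antisymm
      · intro w hw
        rw [Finset.mem_filter] at hw
        rw [Finset.mem_sdiff, Finset.mem_singleton]
        exact hw.2
      · intro w hw
        rw [Finset.mem_sdiff, Finset.mem_singleton] at hw
        exact Finset.mem_filter.2 ⟨hmemVu e he w hw.1 hw.2, hw⟩
    calc 2 * (Eu B v u).card
        = ∑ e ∈ Eu B v u, ((Vu B v u).filter (fun w => w ∈ e ∧ w ≠ u)).card := by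
          rw [Finset.sum_congr rfl step2, Finset.sum_const, smul_eq_mul, mul_comm]
      _ = ∑ e ∈ Eu B v u, ∑ w ∈ Vu B v u, (if w ∈ e ∧ w ≠ u then 1 else 0) := by
          refine Finset.sum_congr rfl fun e _ => ?_
          rw [Finset.card_filter]
      _ = ∑ w ∈ Vu B v u, ∑ e ∈ Eu B v u, (if w ∈ e ∧ w ≠ u then 1 else 0) :=
          Finset.sum_comm
      _ = ∑ w ∈ Vu B v u, ((Eu B v u).filter (fun e => w ∈ e ∧ w ≠ u)).card := by
          refine Finset.sum_congr rfl fun w _ => ?_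
          rw [Finset.card_filter]
      _ ≤ ∑ _w ∈ Vu B v u, (3 * t - 3) := by
          refine Finset.sum_le_sum fun w hw => ?_
          have hsub : (Eu B v u).filter (fun e => w ∈ e ∧ w ≠ u)
              ⊆ B.filter (fun e => u ∈ e ∧ w ∈ e) := by
            intro e he
            rw [Finset.mem_filter] at he ⊢
            exact ⟨(hEuB e he.1).1, hue e he.1, he.2.1⟩
          calc ((Eu B v u).filter (fun e => w ∈ e ∧ w ≠ u)).card
              ≤ codeg B u w := Finset.card_le_card hsub
            _ ≤ 3 * t - 3 := hcodeg u w (fun h => huVu w hw h.symm)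
      _ = (3 * t - 3) * (Vu B v u).card := by
          rw [Finset.sum_const, smul_eq_mul, mul_comm]
  -- degree bound : deg u ≤ |Eu| + (t-1)(6t-2)(3t-3)
  have hC : deg B u ≤ (Eu B v u).card + (t - 1) * (6 * t - 2) * (3 * t - 3) := by
    have hsub : B.filter (fun e => u ∈ e) ⊆ Eu B v u ∪
        (nbhd B u ∩ nbhd B v).biUnion (fun w => B.filter (fun e => u ∈ e ∧ w ∈ e)) := by
      intro e he
      rw [Finset.mem_filter] at he
      obtain ⟨heB, hue'⟩ := he
      by_cases hE : e ∈ Eu B v u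
      · exact Finset.mem_union_left _ hE
      · refine Finset.mem_union_right _ ?_
        have hcap : e ∩ nbhd B v ≠ {u} := by
          intro h; exact hE (Finset.mem_filter.2 ⟨heB, h⟩)
        have hss : ({u} : Finset V) ⊂ e ∩ nbhd B v := by
          refine Finset.ssubset_iff_subset_ne.2 ⟨?_, fun h => hcap h.symm⟩
          exact Finset.singleton_subset_iff.2 (Finset.mem_inter.2 ⟨hue', hu⟩)
        obtain ⟨w, hw, hwu⟩ := Finset.exists_of_ssubset hss
        rw [Finset.mem_singleton] at hwu
        rw [Finset.mem_inter] at hw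
        refine Finset.mem_biUnion.2 ⟨w, ?_, Finset.mem_filter.2 ⟨heB, hue', hw.1⟩⟩
        refine Finset.mem_inter.2 ⟨?_, hw.2⟩
        simp only [nbhd, Finset.mem_filter, Finset.mem_univ, true_and]
        exact ⟨hwu, e, heB, hue', hw.1⟩
    calc deg B u = (B.filter (fun e => u ∈ e)).card := rfl
      _ ≤ (Eu B v u ∪ (nbhd B u ∩ nbhd B v).biUnion
            (fun w => B.filter (fun e => u ∈ e ∧ w ∈ e))).card := Finset.card_le_card hsub
      _ ≤ (Eu B v u).card + ((nbhd B u ∩ nbhd B v).biUnion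
            (fun w => B.filter (fun e => u ∈ e ∧ w ∈ e))).card := Finset.card_union_le _ _
      _ ≤ (Eu B v u).card + ∑ w ∈ nbhd B u ∩ nbhd B v, (B.filter (fun e => u ∈ e ∧ w ∈ e)).card := by
          exact Nat.add_le_add_left (Finset.card_biUnion_le) _
      _ ≤ (Eu B v u).card + ∑ _w ∈ nbhd B u ∩ nbhd B v, (3 * t - 3) := by
          refine Nat.add_le_add_left (Finset.sum_le_sum fun w hw => ?_) _
          have hwu : w ≠ u := by
            have := (Finset.mem_inter.1 hw).1
            simp only [nbhd, Finset.mem_filter, Finset.mem_univ, true_and] at this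
            exact this.1
          exact hcodeg u w (Ne.symm hwu)
      _ ≤ (Eu B v u).card + (t - 1) * (6 * t - 2) * (3 * t - 3) := by
          rw [Finset.sum_const, smul_eq_mul]
          exact Nat.add_le_add_left
            (Nat.mul_le_mul_right _ (hcn u v hu'.1)) _
  -- Now the real arithmetic
  have hT : (3 : ℝ) ≤ (t : ℝ) := by exact_mod_cast ht
  have h33 : (3 : ℕ) ≤ 3 * t := by omega
  have h1t : (1 : ℕ) ≤ t := by omega
  have h26 : (2 : ℕ) ≤ 6 * t := by omega
  have hB2' : 2 * ((Eu B v u).card : ℝ) ≤ (3 * (t : ℝ) - 3) * ((Vu B v u).card : ℝ) := by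
    have := hB2
    have h := (Nat.cast_le (α := ℝ)).2 this
    push_cast [Nat.cast_sub h33] at h
    convert h using 2 <;> push_cast <;> ring
  have hC' : (deg B u : ℝ) ≤ ((Eu B v u).card : ℝ)
      + ((t : ℝ) - 1) * (6 * (t : ℝ) - 2) * (3 * (t : ℝ) - 3) := by
    have h := (Nat.cast_le (α := ℝ)).2 hC
    push_cast [Nat.cast_sub h33, Nat.cast_sub h1t, Nat.cast_sub h26] at h
    convert h using 2 <;> push_cast <;> ring
  have hpos : (0 : ℝ) < 3 * (t : ℝ) - 3 := by linarith
  rw [div_mul_eq_mul_div, div_le_iff₀ hpos]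
  have hEq : ((t : ℝ) - 1) * (6 * (t : ℝ) - 2) * (3 * (t : ℝ) - 3)
      = 3 * ((t : ℝ) - 1) ^ 2 * (6 * (t : ℝ) - 2) := by ring
  nlinarith [hB2', hC', hEq, hpos]
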